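/- arXiv:2401.01236 — 2 statements merged into one kernel-verified Lean document; each statement's English description precedes it below -/
import Mathlib

section
/- Let (ψ_i)_{i ∈ Fin 3} and (φ_j)_{j ∈ Fin 3} be two orthonormal bases of ℂ³ such that ⟨ψ_i, φ_j⟩ ≠ 0 for all i, j. Then for every i and j, the binary projective measurements {P_{ψ_i}, I − P_{ψ_i}} and {P_{φ_j}, I − P_{φ_j}} are not jointly measurable. Since every nontrivial coarse-graining of a 3-outcome rank-one projective measurement is of this form, the two measurements remain incompatible under all nontrivial coarse-grainings; i.e., in dimension 3 the condition ⟨ψ_i, φ_j⟩ ≠ 0 for all i, j is sufficient for full incompatibility with respect to coarse-graining. -/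
open Matrix Finset
open scoped ComplexOrder

noncomputable section

/-- A `d`-outcome POVM on `ℂ^n`: positive semidefinite effects summing to the identity. -/
def IsPOVM {n d : ℕ} (M : Fin d → Matrix (Fin n) (Fin n) ℂ) : Prop :=
  (∀ z, (M z).PosSemidef) ∧ ∑ z, M z = 1

/-- Coarse-graining of a `d`-outcome POVM along `f : Fin d → Fin k`. -/
def coarseGrain {n d k : ℕ} (M : Fin d → Matrix (Fin n) (Fin n) ℂ) (f : Fin d → Fin k)
    (z' : Fin k) : Matrix (Fin n) (Fin n) ℂ :=
  ∑ z ∈ Finset.univ.filter (fun z => f z = z'), M z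

/-- Compatibility of a finite family of `d`-outcome POVMs: existence of a parent POVM
`G` together with classical post-processings `p`. -/
def Compatible {n m d : ℕ} (M : Fin m → Fin d → Matrix (Fin n) (Fin n) ℂ) : Prop :=
  ∃ (L : ℕ) (G : Fin L → Matrix (Fin n) (Fin n) ℂ) (p : Fin m → Fin d → Fin L → ℝ),
    (∀ l, (G l).PosSemidef) ∧ (∑ l, G l = 1) ∧
    (∀ x z l, 0 ≤ p x z l) ∧ (∀ x l, ∑ z, p x z l = 1) ∧
    (∀ x z, M x z = ∑ l, (p x z l : ℂ) • G l)

/-- Joint measurability of two POVMs via a joint parent POVM with marginals `A` and `B`. -/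
def JointlyMeasurable {n a b : ℕ} (A : Fin a → Matrix (Fin n) (Fin n) ℂ)
    (B : Fin b → Matrix (Fin n) (Fin n) ℂ) : Prop :=
  ∃ G : Fin a → Fin b → Matrix (Fin n) (Fin n) ℂ,
    (∀ i j, (G i j).PosSemidef) ∧ (∑ i, ∑ j, G i j = 1) ∧
    (∀ i, A i = ∑ j, G i j) ∧ (∀ j, B j = ∑ i, G i j)

/-!
If a joint POVM `G` had marginals `{P, 1 - P}` and `{Q, 1 - Q}` for rank-one projections
`P = |v⟩⟨v|`, `Q = |w⟩⟨w|`, then `0 ≤ G₀₀ ≤ P, Q` forces `G₀₀` to be a common multiple of `P`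
and `Q`, hence zero when `P ≠ Q`. Then `G₁₁ = 1 - P - Q` would be positive semidefinite, which
fails at `w` as soon as `⟨v, w⟩ ≠ 0`. Joint measurability passes to coarse-grainings, and a
nontrivial coarse-graining of a three-outcome measurement leaves some outcome unmerged, so the
general case reduces to the binary one.
-/

section RankOne

variable {m : Type*} [Fintype m]

lemma vecMulVec_mulVec_eq_smul {R : Type*} [CommSemiring R] (u v w : m → R) :
    vecMulVec u v *ᵥ w = (v ⬝ᵥ w) • u := by
  rw [vecMulVec_mulVec, op_smul_eq_smul]

lemma Matrix.PosSemidef.exists_eq_smul_vecMulVec_of_sub {v : m → ℂ} (hv : star v ⬝ᵥ v = 1)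
    {A : Matrix m m ℂ} (hA : A.PosSemidef) (hPA : (vecMulVec v (star v) - A).PosSemidef) :
    ∃ c : ℂ, A = c • vecMulVec v (star v) := by
  have hker : ∀ x, star v ⬝ᵥ x = 0 → A *ᵥ x = 0 := by
    intro x hx
    rw [← hA.dotProduct_mulVec_zero_iff]
    have hPx : star x ⬝ᵥ vecMulVec v (star v) *ᵥ x = 0 := by
      rw [vecMulVec_mulVec_eq_smul, hx, zero_smul, dotProduct_zero]
    have h := hPA.dotProduct_mulVec_nonneg x
    rw [sub_mulVec, dotProduct_sub, hPx, zero_sub, neg_nonneg] at h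
    exact le_antisymm h (hA.dotProduct_mulVec_nonneg x)
  set u := A *ᵥ v
  have hAu : A = vecMulVec u (star v) := by
    refine ext_iff_mulVec.mpr fun x => ?_
    have hx : star v ⬝ᵥ (x - (star v ⬝ᵥ x) • v) = 0 := by
      rw [dotProduct_sub, dotProduct_smul, hv, smul_eq_mul, mul_one, sub_self]
    have h := hker _ hx
    rwa [mulVec_sub, mulVec_smul, sub_eq_zero, ← vecMulVec_mulVec_eq_smul] at h
  -- Hermiticity of `A = u v*` forces `u ∥ v`.
  have hu : u = (star u ⬝ᵥ v) • v := by
    have h := congrArg (· *ᵥ v) (hA.1.eq.trans hAu)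
    simp only [hAu, conjTranspose_vecMulVec, star_star, vecMulVec_mulVec_eq_smul, hv,
      one_smul] at h
    exact h.symm
  exact ⟨star u ⬝ᵥ v, by rw [← smul_vecMulVec, ← hu, hAu]⟩

lemma dotProduct_eq_zero_of_posSemidef_one_sub_sub [DecidableEq m] {v w : m → ℂ}
    (hw : star w ⬝ᵥ w = 1)
    (h : (1 - vecMulVec v (star v) - vecMulVec w (star w)).PosSemidef) :
    star v ⬝ᵥ w = 0 := by
  have hval : star w ⬝ᵥ (1 - vecMulVec v (star v) - vecMulVec w (star w)) *ᵥ w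
      = -(star v ⬝ᵥ w * star (star v ⬝ᵥ w)) := by
    simp only [sub_mulVec, one_mulVec, vecMulVec_mulVec_eq_smul, hw, dotProduct_sub,
      dotProduct_smul, smul_eq_mul, ← star_dotProduct, mul_one]
    ring
  have h0 := h.dotProduct_mulVec_nonneg w
  rw [hval, neg_nonneg] at h0
  exact (CStarRing.mul_star_self_eq_zero_iff _).mp (le_antisymm h0 (mul_star_self_nonneg _))

lemma vecMulVec_star_ne {v w x : m → ℂ} (hw : star w ⬝ᵥ w = 1)
    (hxv : star x ⬝ᵥ v = 0) (hxw : star x ⬝ᵥ w ≠ 0) :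
    vecMulVec v (star v) ≠ vecMulVec w (star w) := by
  intro h
  have hw' := congrArg (star x ⬝ᵥ · *ᵥ w) h
  simp only [vecMulVec_mulVec_eq_smul, dotProduct_smul, hxv, hw, smul_zero, one_smul] at hw'
  exact hxw hw'.symm

lemma sum_vecMulVec_star_eq_one [DecidableEq m] (ψ : m → m → ℂ)
    (hψ : ∀ i i', star (ψ i) ⬝ᵥ ψ i' = if i = i' then 1 else 0) :
    ∑ i, vecMulVec (ψ i) (star (ψ i)) = 1 := by
  set V : Matrix m m ℂ := of fun k i => ψ i k
  have hVV : Vᴴ * V = 1 := by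
    ext i i'
    simpa [mul_apply, dotProduct, one_apply, V] using hψ i i'
  rw [← mul_eq_one_comm.mp hVV]
  ext k l
  simp [mul_apply, Matrix.sum_apply, vecMulVec_apply, V]

end RankOne

section CoarseGraining

variable {n a b : ℕ} {A : Fin a → Matrix (Fin n) (Fin n) ℂ} {B : Fin b → Matrix (Fin n) (Fin n) ℂ}

lemma coarseGrain_of_forall_eq {k : ℕ} {f : Fin a → Fin k} {c : Fin k} (hf : ∀ i, f i = c) :
    coarseGrain A f c = ∑ i, A i := by
  rw [coarseGrain, filter_true_of_mem fun i _ => hf i]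

lemma coarseGrain_apply_of_fiber_eq_singleton {k : ℕ} {f : Fin a → Fin k} {i : Fin a}
    (hi : ∀ i', f i' = f i → i' = i) : coarseGrain A f (f i) = A i :=
  sum_eq_single_of_mem i (by simp) fun i' hi' hne => absurd (hi i' (mem_filter.mp hi').2) hne

lemma coarseGrain_ite_eq (hA : ∑ i, A i = 1) (i : Fin a) :
    coarseGrain A (fun i' => if i' = i then 0 else 1) = ![A i, 1 - A i] := by
  funext k
  fin_cases k
  · simp [coarseGrain, sum_filter]
  · simp [coarseGrain, ← hA, ← ne_eq, filter_ne', sum_erase_eq_sub]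

lemma JointlyMeasurable.sum_left_eq_one (h : JointlyMeasurable A B) : ∑ i, A i = 1 := by
  obtain ⟨G, -, hsum, hA, -⟩ := h
  simp_rw [hA]
  exact hsum

lemma JointlyMeasurable.sum_right_eq_one (h : JointlyMeasurable A B) : ∑ j, B j = 1 := by
  obtain ⟨G, -, hsum, -, hB⟩ := h
  simp_rw [hB]
  rw [sum_comm]
  exact hsum

lemma JointlyMeasurable.coarseGrain {a' b' : ℕ} (h : JointlyMeasurable A B)
    (f : Fin a → Fin a') (g : Fin b → Fin b') :
    JointlyMeasurable (coarseGrain A f) (coarseGrain B g) := by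
  obtain ⟨G, hG, hsum, hA, hB⟩ := h
  set G' : Fin a' → Fin b' → Matrix (Fin n) (Fin n) ℂ :=
    fun i' j' => ∑ i with f i = i', ∑ j with g j = j', G i j
  have hrow : ∀ i', ∑ j', G' i' j' = ∑ i with f i = i', ∑ j, G i j := by
    intro i'
    rw [sum_comm]
    simp_rw [sum_fiberwise]
  have hcol : ∀ j', ∑ i', G' i' j' = ∑ j with g j = j', ∑ i, G i j := by
    intro j'
    rw [sum_fiberwise (g := f) (f := fun i => ∑ j with g j = j', G i j), sum_comm]
  refine ⟨G', fun _ _ => posSemidef_sum _ fun i _ => posSemidef_sum _ fun j _ => hG i j,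
    ?_, fun i' => ?_, fun j' => ?_⟩
  · simp_rw [hrow]
    rw [sum_fiberwise (f := fun i => ∑ j, G i j), hsum]
  · simp_rw [hrow, ← hA]
    rfl
  · simp_rw [hcol, ← hB]
    rfl

lemma JointlyMeasurable.binary (h : JointlyMeasurable A B) (i : Fin a) (j : Fin b) :
    JointlyMeasurable ![A i, 1 - A i] ![B j, 1 - B j] := by
  have h' := h.coarseGrain (fun i' => if i' = i then (0 : Fin 2) else 1)
    (fun j' => if j' = j then (0 : Fin 2) else 1)
  rwa [coarseGrain_ite_eq h.sum_left_eq_one, coarseGrain_ite_eq h.sum_right_eq_one] at h'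

end CoarseGraining

lemma not_jointlyMeasurable_vecMulVec_star {n : ℕ} {v w : Fin n → ℂ}
    (hv : star v ⬝ᵥ v = 1) (hw : star w ⬝ᵥ w = 1) (hvw : star v ⬝ᵥ w ≠ 0)
    (hne : vecMulVec v (star v) ≠ vecMulVec w (star w)) :
    ¬ JointlyMeasurable ![vecMulVec v (star v), 1 - vecMulVec v (star v)]
        ![vecMulVec w (star w), 1 - vecMulVec w (star w)] := by
  rintro ⟨G, hG, hsum, hA, hB⟩
  set P := vecMulVec v (star v)
  set Q := vecMulVec w (star w)
  have hP : P = G 0 0 + G 0 1 := by simpa [Fin.sum_univ_two] using hA 0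
  have hQ : Q = G 0 0 + G 1 0 := by simpa [Fin.sum_univ_two] using hB 0
  have hPG : (P - G 0 0).PosSemidef := by rw [hP, add_sub_cancel_left]; exact hG 0 1
  have hQG : (Q - G 0 0).PosSemidef := by rw [hQ, add_sub_cancel_left]; exact hG 1 0
  obtain ⟨c, hc⟩ := (hG 0 0).exists_eq_smul_vecMulVec_of_sub hv hPG
  obtain ⟨d, hd⟩ := (hG 0 0).exists_eq_smul_vecMulVec_of_sub hw hQG
  have hcd : c = d := by
    simpa [dotProduct_comm v, dotProduct_comm w, hv, hw] using congrArg trace (hc.symm.trans hd)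
  have hG00 : G 0 0 = 0 := by
    by_cases hc0 : c = 0
    · rw [hc, hc0, zero_smul]
    · exact absurd (smul_right_injective _ hc0 (hc.symm.trans (hcd ▸ hd))) hne
  have hG11 : G 1 1 = 1 - P - Q := by
    rw [← hsum, hP, hQ]
    simp only [Fin.sum_univ_two, hG00]
    abel
  exact hvw (dotProduct_eq_zero_of_posSemidef_one_sub_sub hw (hG11 ▸ hG 1 1))

lemma Fin.three_const_or_exists_singleton_fiber {β : Type*} (f : Fin 3 → β) :
    (∀ i, f i = f 0) ∨ ∃ i, ∀ i', f i' = f i → i' = i := by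
  by_cases h01 : f 0 = f 1 <;> by_cases h02 : f 0 = f 2
  · exact .inl fun i => by fin_cases i <;> simp_all
  · exact .inr ⟨2, fun i' hi' => by fin_cases i' <;> simp_all⟩
  · exact .inr ⟨1, fun i' hi' => by fin_cases i' <;> simp_all⟩
  · exact .inr ⟨0, fun i' hi' => by fin_cases i' <;> simp_all⟩

/-- In dimension 3, nonvanishing of all overlaps between two orthonormal bases is sufficient for
full incompatibility w.r.t. coarse-graining: every pair of binary coarse-grainings
`{P_{ψ i}, 1 − P_{ψ i}}`, `{P_{φ j}, 1 − P_{φ j}}` is not jointly measurable, and the two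
rank-one projective measurements remain incompatible under all nontrivial coarse-grainings. -/
theorem dim_three_overlaps_nonzero_sufficient
    (ψ φ : Fin 3 → Fin 3 → ℂ)
    (hψ : ∀ i i', star (ψ i) ⬝ᵥ ψ i' = if i = i' then 1 else 0)
    (hφ : ∀ j j', star (φ j) ⬝ᵥ φ j' = if j = j' then 1 else 0)
    (hover : ∀ i j, star (ψ i) ⬝ᵥ φ j ≠ 0) :
    (∀ i j : Fin 3,
      ¬ JointlyMeasurable
          ![vecMulVec (ψ i) (star (ψ i)), 1 - vecMulVec (ψ i) (star (ψ i))]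
          ![vecMulVec (φ j) (star (φ j)), 1 - vecMulVec (φ j) (star (φ j))]) ∧
    (∀ a b : ℕ, 2 ≤ a → 2 ≤ b →
      ∀ (f : Fin 3 → Fin a) (g : Fin 3 → Fin b),
      (∀ z', coarseGrain (fun i => vecMulVec (ψ i) (star (ψ i))) f z' ≠ 1) →
      (∀ z', coarseGrain (fun j => vecMulVec (φ j) (star (φ j))) g z' ≠ 1) →
      ¬ JointlyMeasurable
          (coarseGrain (fun i => vecMulVec (ψ i) (star (ψ i))) f)
          (coarseGrain (fun j => vecMulVec (φ j) (star (φ j))) g)) := by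
  have hψ1 : ∀ i, star (ψ i) ⬝ᵥ ψ i = 1 := fun i => by simpa using hψ i i
  have hφ1 : ∀ j, star (φ j) ⬝ᵥ φ j = 1 := fun j => by simpa using hφ j j
  have hne : ∀ i j, vecMulVec (ψ i) (star (ψ i)) ≠ vecMulVec (φ j) (star (φ j)) := by
    intro i j
    obtain ⟨i', hi'⟩ := exists_ne i
    exact vecMulVec_star_ne (hφ1 j) (by simpa [hi'] using hψ i' i) (hover i' j)
  have hbinary : ∀ i j : Fin 3, ¬ JointlyMeasurable
      ![vecMulVec (ψ i) (star (ψ i)), 1 - vecMulVec (ψ i) (star (ψ i))]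
      ![vecMulVec (φ j) (star (φ j)), 1 - vecMulVec (φ j) (star (φ j))] :=
    fun i j => not_jointlyMeasurable_vecMulVec_star (hψ1 i) (hφ1 j) (hover i j) (hne i j)
  refine ⟨hbinary, fun a b _ _ f g hf hg hJM => ?_⟩
  obtain ⟨i, hi⟩ := (Fin.three_const_or_exists_singleton_fiber f).resolve_left fun hconst =>
    hf _ ((coarseGrain_of_forall_eq hconst).trans (sum_vecMulVec_star_eq_one ψ hψ))
  obtain ⟨j, hj⟩ := (Fin.three_const_or_exists_singleton_fiber g).resolve_left fun hconst =>
    hg _ ((coarseGrain_of_forall_eq hconst).trans (sum_vecMulVec_star_eq_one φ hφ))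
  have hbin := hJM.binary (f i) (g j)
  rw [coarseGrain_apply_of_fiber_eq_singleton hi,
    coarseGrain_apply_of_fiber_eq_singleton hj] at hbin
  exact hbinary i j hbin
end
end

section
/- Let ν₀, ν₁, ν₂ ∈ (0,1], and consider the three noisy Pauli binary qubit POVMs with effects M_z = (1/2)(I + (−1)^z ν₀ σ_x), N_z = (1/2)(I + (−1)^z ν₁ σ_y), R_z = (1/2)(I + (−1)^z ν₂ σ_z), z ∈ {0,1}. Then the following are equivalent: (1) for every permutation assigning one measurement as the 'pure' one and the other two as the mixed pair, and every q ∈ [0,1], the pure measurement and the disjoint-convex-mixture (q·(first of pair)_z + (1−q)·(second of pair)_z)_z are not jointly measurable; (2) min{ ν₀² + ν₁²ν₂²/(ν₁²+ν₂²), ν₁² + ν₀²ν₂²/(ν₀²+ν₂²), ν₂² + ν₀²ν₁²/(ν₀²+ν₁²) } > 1. -/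
open Matrix Finset
open scoped ComplexOrder

noncomputable section

/-- The Pauli matrix `σ_x`. -/
def σx : Matrix (Fin 2) (Fin 2) ℂ := !![0, 1; 1, 0]

/-- The Pauli matrix `σ_y`. -/
def σy : Matrix (Fin 2) (Fin 2) ℂ := !![0, -Complex.I; Complex.I, 0]

/-- The Pauli matrix `σ_z`. -/
def σz : Matrix (Fin 2) (Fin 2) ℂ := !![1, 0; 0, -1]

/-- The noisy Pauli binary qubit POVMs: effects `(1/2)(I + (−1)^z ν_i σ_i)` for
`σ_0 = σ_x, σ_1 = σ_y, σ_2 = σ_z`. -/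
def noisyPauli (ν : Fin 3 → ℝ) (i : Fin 3) (z : Fin 2) : Matrix (Fin 2) (Fin 2) ℂ :=
  (1/2 : ℂ) • (1 + (((-1 : ℂ)) ^ (z : ℕ) * (ν i : ℂ)) • ![σx, σy, σz] i)

/-! Writing a qubit operator as `(g·1 + m·σ)/2`, its trace is `g` and its determinant
`(g² - ‖m‖²)/4`, so it is positive semidefinite iff `‖m‖ ≤ g`. For unbiased binary POVMs
with Bloch vectors `a` and `b` this gives Busch's criterion: they are jointly measurable iff
`‖a + b‖ + ‖a - b‖ ≤ 2`. Indeed, the marginal conditions force `a + b = m₀₀ - m₁₁` and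
`a - b = m₀₁ - m₁₀` for the Bloch vectors `m_zz'` of a joint POVM, whose weights `g_zz'` sum
to `2`; conversely the four effects with Bloch vectors `(±a ± b)/2` and suitable weights form
a joint POVM. The Bloch vector `ν_i e_i` of a noisy Pauli measurement is orthogonal to that of
any mixture of the other two, so the criterion reads `ν_i² + (q ν_j)² + ((1 - q) ν_k)² ≤ 1`,
and the minimum over `q ∈ [0, 1]` is `ν_i² + ν_j² ν_k² / (ν_j² + ν_k²)`. -/

theorem Matrix.IsHermitian.posSemidef_iff_of_fin_two {𝕜 : Type*} [RCLike 𝕜]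
    {A : Matrix (Fin 2) (Fin 2) 𝕜} (hA : A.IsHermitian) :
    A.PosSemidef ↔ 0 ≤ A.trace ∧ 0 ≤ A.det := by
  refine ⟨fun h => ⟨h.trace_nonneg, h.det_nonneg⟩, fun ⟨htr, hdet⟩ => ?_⟩
  rw [hA.trace_eq_sum_eigenvalues, Fin.sum_univ_two] at htr
  rw [hA.det_eq_prod_eigenvalues, Fin.prod_univ_two] at hdet
  norm_cast at htr hdet
  simp only [hA.posSemidef_iff_eigenvalues_nonneg, Pi.le_def, Pi.zero_apply, Fin.forall_fin_two]
  constructor <;> nlinarith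

def pauli : Fin 3 → Matrix (Fin 2) (Fin 2) ℂ := ![σx, σy, σz]

def qubitOp (g : ℝ) (m : EuclideanSpace ℝ (Fin 3)) : Matrix (Fin 2) (Fin 2) ℂ :=
  (1 / 2 : ℂ) • ((g : ℂ) • 1 + ∑ i, (m i : ℂ) • pauli i)

section qubitOp

variable (g : ℝ) (m : EuclideanSpace ℝ (Fin 3))

theorem qubitOp_eq :
    qubitOp g m = !![((g + m 2) / 2 : ℂ), (m 0 - m 1 * Complex.I) / 2;
      (m 0 + m 1 * Complex.I) / 2, (g - m 2) / 2] := by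
  ext i j
  fin_cases i <;> fin_cases j <;>
    simp [qubitOp, pauli, σx, σy, σz, Fin.sum_univ_three] <;> ring

theorem qubitOp_add (g' : ℝ) (m' : EuclideanSpace ℝ (Fin 3)) :
    qubitOp (g + g') (m + m') = qubitOp g m + qubitOp g' m' := by
  simp only [qubitOp, PiLp.add_apply, Complex.ofReal_add, add_smul, Finset.sum_add_distrib]
  module

theorem ofReal_smul_qubitOp (c : ℝ) : (c : ℂ) • qubitOp g m = qubitOp (c * g) (c • m) := by
  simp only [qubitOp, PiLp.smul_apply, smul_eq_mul, Complex.ofReal_mul, mul_smul,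
    ← Finset.smul_sum]
  module

theorem qubitOp_two_zero : qubitOp 2 0 = 1 := by
  simp [qubitOp]

theorem trace_qubitOp : (qubitOp g m).trace = g := by
  rw [qubitOp_eq, trace_fin_two_of]
  ring

theorem det_qubitOp : (qubitOp g m).det = ((g ^ 2 - ‖m‖ ^ 2) / 4 : ℝ) := by
  rw [EuclideanSpace.real_norm_sq_eq, Fin.sum_univ_three, qubitOp_eq, det_fin_two_of]
  push_cast
  ring_nf
  rw [Complex.I_sq]
  ring

theorem isHermitian_qubitOp : (qubitOp g m).IsHermitian := by
  rw [qubitOp_eq]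
  ext i j
  fin_cases i <;> fin_cases j <;> simp [Complex.ext_iff]

theorem qubitOp_posSemidef_iff : (qubitOp g m).PosSemidef ↔ ‖m‖ ≤ g := by
  rw [(isHermitian_qubitOp g m).posSemidef_iff_of_fin_two, trace_qubitOp, det_qubitOp,
    Complex.zero_le_real, Complex.zero_le_real]
  constructor
  · rintro ⟨hg, hdet⟩
    exact (pow_le_pow_iff_left₀ (norm_nonneg m) hg two_ne_zero).1 (by linarith)
  · intro h
    exact ⟨(norm_nonneg m).trans h, by nlinarith [pow_le_pow_left₀ (norm_nonneg m) h 2]⟩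

end qubitOp

def blochVec : Matrix (Fin 2) (Fin 2) ℂ →ₗ[ℝ] EuclideanSpace ℝ (Fin 3) where
  toFun G := WithLp.toLp 2 fun i => (G * pauli i).trace.re
  map_add' G H := by ext i; simp [add_mul]
  map_smul' c G := by ext i; simp

theorem blochVec_eq (G : Matrix (Fin 2) (Fin 2) ℂ) :
    blochVec G =
      !₂[(G 0 1).re + (G 1 0).re, (G 1 0).im - (G 0 1).im, (G 0 0).re - (G 1 1).re] := by
  ext i
  fin_cases i <;> simp [blochVec, pauli, σx, σy, σz, trace_fin_two, mul_apply] <;> ring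

theorem blochVec_qubitOp (g : ℝ) (m : EuclideanSpace ℝ (Fin 3)) :
    blochVec (qubitOp g m) = m := by
  ext i
  fin_cases i <;> simp [blochVec_eq, qubitOp_eq] <;> ring

theorem blochVec_one : blochVec 1 = 0 := by
  rw [← qubitOp_two_zero, blochVec_qubitOp]

theorem Matrix.IsHermitian.qubitOp_trace_blochVec {G : Matrix (Fin 2) (Fin 2) ℂ}
    (hG : G.IsHermitian) : qubitOp G.trace.re (blochVec G) = G := by
  obtain ⟨h01re, h01im⟩ := Complex.ext_iff.1 (hG.apply 0 1)
  have h00 := congrArg Complex.im (hG.apply 0 0)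
  have h11 := congrArg Complex.im (hG.apply 1 1)
  simp only [RCLike.star_def, Complex.conj_re, Complex.conj_im] at h01re h01im h00 h11
  rw [qubitOp_eq, blochVec_eq]
  ext i j
  fin_cases i <;> fin_cases j <;> apply Complex.ext <;> simp [trace_fin_two] <;> linarith

theorem Matrix.PosSemidef.norm_blochVec_le {G : Matrix (Fin 2) (Fin 2) ℂ} (hG : G.PosSemidef) :
    ‖blochVec G‖ ≤ G.trace.re := by
  rwa [← hG.isHermitian.qubitOp_trace_blochVec, qubitOp_posSemidef_iff] at hG

def blochPOVM (r : EuclideanSpace ℝ (Fin 3)) (z : Fin 2) : Matrix (Fin 2) (Fin 2) ℂ :=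
  qubitOp 1 ((-1 : ℝ) ^ (z : ℕ) • r)

theorem sum_blochPOVM (r : EuclideanSpace ℝ (Fin 3)) : ∑ z, blochPOVM r z = 1 := by
  simp [blochPOVM, ← qubitOp_add, one_add_one_eq_two, qubitOp_two_zero]

theorem blochVec_blochPOVM (r : EuclideanSpace ℝ (Fin 3)) (z : Fin 2) :
    blochVec (blochPOVM r z) = (-1 : ℝ) ^ (z : ℕ) • r :=
  blochVec_qubitOp _ _

theorem smul_blochPOVM_add_smul_blochPOVM (q : ℝ) (a b : EuclideanSpace ℝ (Fin 3)) :
    (fun z => (q : ℂ) • blochPOVM a z + ((1 - q : ℝ) : ℂ) • blochPOVM b z) =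
      blochPOVM (q • a + (1 - q) • b) := by
  ext z : 1
  simp only [blochPOVM, ofReal_smul_qubitOp, ← qubitOp_add]
  congr 1
  · ring
  · module

section Busch

variable {a b : EuclideanSpace ℝ (Fin 3)}

theorem JointlyMeasurable.norm_add_add_norm_sub_le
    (h : JointlyMeasurable (blochPOVM a) (blochPOVM b)) : ‖a + b‖ + ‖a - b‖ ≤ 2 := by
  obtain ⟨G, hG, hsum, hA, hB⟩ := h
  simp only [Fin.sum_univ_two] at hsum hA hB
  have hplus : a + b = blochVec (G 0 0) - blochVec (G 1 1) := by
    have : blochPOVM a 0 + blochPOVM b 0 - 1 = G 0 0 - G 1 1 := by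
      rw [hA, hB, ← hsum]; abel
    simpa [blochVec_blochPOVM, blochVec_one] using congrArg blochVec this
  have hminus : a - b = blochVec (G 0 1) - blochVec (G 1 0) := by
    have : blochPOVM a 0 - blochPOVM b 0 = G 0 1 - G 1 0 := by
      rw [hA, hB]; abel
    simpa [blochVec_blochPOVM] using congrArg blochVec this
  have htrace :
      (G 0 0).trace.re + (G 0 1).trace.re + (G 1 0).trace.re + (G 1 1).trace.re = 2 := by
    simpa [trace_add, add_assoc] using congrArg (fun M => M.trace.re) hsum
  have hnorm (z z' : Fin 2) := (hG z z').norm_blochVec_le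
  calc ‖a + b‖ + ‖a - b‖
      ≤ (‖blochVec (G 0 0)‖ + ‖blochVec (G 1 1)‖) +
          (‖blochVec (G 0 1)‖ + ‖blochVec (G 1 0)‖) := by
        rw [hplus, hminus]
        exact add_le_add (norm_sub_le _ _) (norm_sub_le _ _)
    _ ≤ 2 := by linarith [hnorm 0 0, hnorm 0 1, hnorm 1 0, hnorm 1 1]

theorem jointlyMeasurable_blochPOVM_of_norm_add_add_norm_sub_le
    (h : ‖a + b‖ + ‖a - b‖ ≤ 2) : JointlyMeasurable (blochPOVM a) (blochPOVM b) := by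
  -- The weights `1/2 ± d` of the effects with Bloch vectors `±(a + b)/2` and `±(a - b)/2`
  -- dominate the norms of these vectors exactly when `‖a + b‖ + ‖a - b‖ ≤ 2`.
  set d := (‖a + b‖ - ‖a - b‖) / 4
  let G (z z' : Fin 2) : Matrix (Fin 2) (Fin 2) ℂ :=
    qubitOp (1 / 2 + (-1 : ℝ) ^ (z : ℕ) * (-1) ^ (z' : ℕ) * d)
      ((1 / 2 : ℝ) • ((-1 : ℝ) ^ (z : ℕ) • a + (-1 : ℝ) ^ (z' : ℕ) • b))
  have hrow (z : Fin 2) : ∑ z', G z z' = blochPOVM a z := by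
    simp only [G, blochPOVM, Fin.sum_univ_two, ← qubitOp_add, Fin.val_zero, Fin.val_one, pow_zero,
      pow_one]
    congr 1
    · ring
    · module
  have hcol (z' : Fin 2) : ∑ z, G z z' = blochPOVM b z' := by
    simp only [G, blochPOVM, Fin.sum_univ_two, ← qubitOp_add, Fin.val_zero, Fin.val_one, pow_zero,
      pow_one]
    congr 1
    · ring
    · module
  refine ⟨G, fun z z' => ?_, by simp_rw [hrow, sum_blochPOVM], fun z => (hrow z).symm,
    fun z' => (hcol z').symm⟩
  have hba : ‖-a + b‖ = ‖a - b‖ := by rw [neg_add_eq_sub, norm_sub_rev]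
  have hab : ‖-a - b‖ = ‖a + b‖ := by rw [← neg_add', norm_neg]
  rw [qubitOp_posSemidef_iff, norm_smul]
  fin_cases z <;> fin_cases z' <;>
    simp only [one_div, norm_inv, Real.norm_ofNat, pow_zero, pow_one, one_smul, neg_smul, mul_one,
      one_mul, mul_neg, neg_mul, neg_neg, ← sub_eq_add_neg, hba, hab, d] <;>
    linarith

theorem jointlyMeasurable_blochPOVM_iff :
    JointlyMeasurable (blochPOVM a) (blochPOVM b) ↔ ‖a + b‖ + ‖a - b‖ ≤ 2 :=
  ⟨JointlyMeasurable.norm_add_add_norm_sub_le,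
    jointlyMeasurable_blochPOVM_of_norm_add_add_norm_sub_le⟩

theorem jointlyMeasurable_blochPOVM_iff_of_inner_eq_zero (h : inner ℝ a b = 0) :
    JointlyMeasurable (blochPOVM a) (blochPOVM b) ↔ ‖a‖ ^ 2 + ‖b‖ ^ 2 ≤ 1 := by
  have hadd : ‖a + b‖ ^ 2 = ‖a‖ ^ 2 + ‖b‖ ^ 2 := by
    simp only [sq, norm_add_sq_eq_norm_sq_add_norm_sq_real h]
  have hsub : ‖a - b‖ = ‖a + b‖ := by
    rw [← sq_eq_sq₀ (norm_nonneg _) (norm_nonneg _), hadd, sq, sq, sq,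
      norm_sub_sq_eq_norm_sq_add_norm_sq_real h]
  rw [jointlyMeasurable_blochPOVM_iff, hsub, ← hadd, sq_le_one_iff₀ (norm_nonneg _)]
  constructor <;> intro <;> linarith

end Busch

-- Also for `β = γ = 0`, where the minimum is `0 = 0 / 0`.
theorem isLeast_sq_mul_add_sq_one_sub_mul (β γ : ℝ) :
    IsLeast ((fun q => (q * β) ^ 2 + ((1 - q) * γ) ^ 2) '' Set.Icc 0 1)
      (β ^ 2 * γ ^ 2 / (β ^ 2 + γ ^ 2)) := by
  rcases (add_nonneg (sq_nonneg β) (sq_nonneg γ)).eq_or_lt with h | h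
  · obtain ⟨rfl, rfl⟩ : β = 0 ∧ γ = 0 := by
      constructor <;> nlinarith [sq_nonneg β, sq_nonneg γ]
    refine ⟨⟨0, by simp, by simp⟩, ?_⟩
    rintro _ ⟨q, -, rfl⟩
    simp
  · refine ⟨⟨γ ^ 2 / (β ^ 2 + γ ^ 2), ⟨by positivity, ?_⟩, ?_⟩, ?_⟩
    · rw [div_le_one h]
      nlinarith [sq_nonneg β]
    · field_simp
      ring
    · rintro _ ⟨q, -, rfl⟩
      rw [div_le_iff₀ h]
      nlinarith [sq_nonneg (q * (β ^ 2 + γ ^ 2) - γ ^ 2)]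

theorem noisyPauli_eq_blochPOVM (ν : Fin 3 → ℝ) (i : Fin 3) :
    noisyPauli ν i = blochPOVM (EuclideanSpace.single i (ν i)) := by
  ext z : 1
  simp only [noisyPauli, blochPOVM, qubitOp, pauli, PiLp.smul_apply, PiLp.single_apply,
    smul_eq_mul, mul_ite, mul_zero, apply_ite Complex.ofReal, Complex.ofReal_zero, ite_smul,
    zero_smul, Finset.sum_ite_eq', Finset.mem_univ, if_true, Complex.ofReal_one, one_smul]
  push_cast
  rfl

section noisyPauli

variable {ν : Fin 3 → ℝ} {i j k : Fin 3}

theorem jointlyMeasurable_noisyPauli_iff (hij : i ≠ j) (hjk : j ≠ k) (hik : i ≠ k) (q : ℝ) :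
    JointlyMeasurable (noisyPauli ν i)
        (fun z => (q : ℂ) • noisyPauli ν j z + ((1 - q : ℝ) : ℂ) • noisyPauli ν k z) ↔
      (q * ν j) ^ 2 + ((1 - q) * ν k) ^ 2 ≤ 1 - ν i ^ 2 := by
  have hjk' : inner ℝ (q • EuclideanSpace.single j (ν j))
      ((1 - q) • EuclideanSpace.single k (ν k)) = 0 := by
    simp [real_inner_smul_left, real_inner_smul_right, EuclideanSpace.inner_single_left,
      hjk.symm]
  simp only [noisyPauli_eq_blochPOVM, smul_blochPOVM_add_smul_blochPOVM]
  rw [jointlyMeasurable_blochPOVM_iff_of_inner_eq_zero, sq, sq,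
    norm_add_sq_eq_norm_sq_add_norm_sq_real hjk']
  · simp only [norm_smul, PiLp.norm_single, Real.norm_eq_abs, ← sq, mul_pow, sq_abs]
    constructor <;> intro <;> linarith
  · simp [inner_add_right, EuclideanSpace.inner_single_left, hij.symm, hik.symm]

theorem forall_not_jointlyMeasurable_noisyPauli_iff (hij : i ≠ j) (hjk : j ≠ k)
    (hik : i ≠ k) :
    (∀ q ∈ Set.Icc (0 : ℝ) 1, ¬ JointlyMeasurable (noisyPauli ν i)
      (fun z => (q : ℂ) • noisyPauli ν j z + ((1 - q : ℝ) : ℂ) • noisyPauli ν k z)) ↔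
      1 < ν i ^ 2 + ν j ^ 2 * ν k ^ 2 / (ν j ^ 2 + ν k ^ 2) := by
  have hleast := isLeast_sq_mul_add_sq_one_sub_mul (ν j) (ν k)
  simp only [jointlyMeasurable_noisyPauli_iff hij hjk hik, not_le]
  rw [← sub_lt_iff_lt_add',
    ← Set.forall_mem_image (f := fun q => (q * ν j) ^ 2 + ((1 - q) * ν k) ^ 2)]
  exact ⟨fun H => H _ hleast.1, fun H _ hx => H.trans_le (hleast.2 hx)⟩

end noisyPauli

theorem noisy_pauli_fully_incompatible_iff_general
    (ν : Fin 3 → ℝ) :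
    (∀ i j k : Fin 3, i ≠ j → j ≠ k → i ≠ k → ∀ q ∈ Set.Icc (0 : ℝ) 1,
      ¬ JointlyMeasurable (noisyPauli ν i)
        (fun z => (q : ℂ) • noisyPauli ν j z + ((1 - q : ℝ) : ℂ) • noisyPauli ν k z)) ↔
    min (ν 0 ^ 2 + ν 1 ^ 2 * ν 2 ^ 2 / (ν 1 ^ 2 + ν 2 ^ 2))
      (min (ν 1 ^ 2 + ν 0 ^ 2 * ν 2 ^ 2 / (ν 0 ^ 2 + ν 2 ^ 2))
        (ν 2 ^ 2 + ν 0 ^ 2 * ν 1 ^ 2 / (ν 0 ^ 2 + ν 1 ^ 2))) > 1 := by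
  have hsymm (j k : Fin 3) : ν j ^ 2 * ν k ^ 2 / (ν j ^ 2 + ν k ^ 2) =
      ν k ^ 2 * ν j ^ 2 / (ν k ^ 2 + ν j ^ 2) := by
    ring
  simp only [gt_iff_lt, lt_min_iff]
  constructor
  · intro h
    refine ⟨?_, ?_, ?_⟩ <;>
      refine (forall_not_jointlyMeasurable_noisyPauli_iff ?_ ?_ ?_).1 (h _ _ _ ?_ ?_ ?_) <;>
      decide
  · rintro ⟨h0, h1, h2⟩ i j k hij hjk hik
    rw [forall_not_jointlyMeasurable_noisyPauli_iff hij hjk hik]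
    fin_cases i <;> fin_cases j <;> fin_cases k <;>
      first
      | exact absurd rfl hij | exact absurd rfl hjk | exact absurd rfl hik
      | assumption | (rw [hsymm]; assumption)

/-- The three noisy Pauli measurements are fully incompatible w.r.t. disjoint-convex-mixing iff
`min{ν₀² + ν₁²ν₂²/(ν₁²+ν₂²), ν₁² + ν₀²ν₂²/(ν₀²+ν₂²), ν₂² + ν₀²ν₁²/(ν₀²+ν₁²)} > 1`. -/
theorem noisy_pauli_fully_incompatible_iff
    (ν : Fin 3 → ℝ) (hν : ∀ i, ν i ∈ Set.Ioc (0 : ℝ) 1) :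
    (∀ i j k : Fin 3, i ≠ j → j ≠ k → i ≠ k → ∀ q ∈ Set.Icc (0 : ℝ) 1,
      ¬ JointlyMeasurable (noisyPauli ν i)
        (fun z => (q : ℂ) • noisyPauli ν j z + ((1 - q : ℝ) : ℂ) • noisyPauli ν k z)) ↔
    min (ν 0 ^ 2 + ν 1 ^ 2 * ν 2 ^ 2 / (ν 1 ^ 2 + ν 2 ^ 2))
      (min (ν 1 ^ 2 + ν 0 ^ 2 * ν 2 ^ 2 / (ν 0 ^ 2 + ν 2 ^ 2))
        (ν 2 ^ 2 + ν 0 ^ 2 * ν 1 ^ 2 / (ν 0 ^ 2 + ν 1 ^ 2))) > 1 :=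
  noisy_pauli_fully_incompatible_iff_general ν
end
end
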